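/- arXiv:2410.11957 — 2 statements merged into one kernel-verified Lean document; each statement's English description precedes it below -/
import Mathlib

section
/- Let A be a 2^n × 2^n complex matrix with singular value decomposition A = UΣV†, where U and V are unitary and Σ is diagonal with nonnegative real entries. Then for every 2^n × 2^n unitary matrix B, ‖A − UV†‖_F ≤ ‖A − B‖_F. In other words, UV† is a closest unitary matrix to A in Frobenius norm. -/
open Matrix

/-- Squared Frobenius norm `‖A‖_F² = ∑ᵢⱼ |Aᵢⱼ|²`. -/
noncomputable def frobSq {m : Type*} [Fintype m] (A : Matrix m m ℂ) : ℝ :=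
  ∑ i, ∑ j, ‖A i j‖ ^ 2

/-! For unitary `B`, `‖A - B‖_F² = ‖A‖_F² + dim - 2 Re tr(Bᴴ A)`, so it suffices to show that
`B = U Vᴴ` maximises `Re tr(Bᴴ A) = Re tr((Vᴴ Bᴴ U) S)`. The matrix `Vᴴ Bᴴ U` is unitary, so its
diagonal entries have modulus at most `1`, and hence `Re tr(W S) ≤ tr S` for every unitary `W`;
equality holds for `B = U Vᴴ`, where `W = 1`. -/

section Frobenius

variable {m : Type*} [Fintype m]

lemma frobSq_eq_re_trace (A : Matrix m m ℂ) : frobSq A = (Aᴴ * A).trace.re := by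
  simp only [frobSq, trace, diag_apply, mul_apply, conjTranspose_apply, Complex.re_sum,
    RCLike.star_def, Complex.conj_mul', ← Complex.ofReal_pow, Complex.ofReal_re]
  exact Finset.sum_comm

lemma frobSq_sub (A B : Matrix m m ℂ) :
    frobSq (A - B) = frobSq A + frobSq B - 2 * (Bᴴ * A).trace.re := by
  have hswap : (Aᴴ * B).trace.re = (Bᴴ * A).trace.re := by
    rw [← conjTranspose_conjTranspose B, ← conjTranspose_mul, trace_conjTranspose,
      conjTranspose_conjTranspose, RCLike.star_def, Complex.conj_re]
  simp only [frobSq_eq_re_trace, conjTranspose_sub, sub_mul, mul_sub, trace_sub,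
    Complex.sub_re, hswap]
  ring

variable [DecidableEq m]

lemma frobSq_of_mem_unitaryGroup {B : Matrix m m ℂ} (hB : B ∈ unitaryGroup m ℂ) :
    frobSq B = Fintype.card m := by
  rw [frobSq_eq_re_trace, ← star_eq_conjTranspose, mem_unitaryGroup_iff'.mp hB, trace_one]
  simp

lemma re_trace_mul_le_of_isDiag {W S : Matrix m m ℂ} (hW : W ∈ unitaryGroup m ℂ)
    (hSdiag : S.IsDiag) (hSnn : ∀ i, 0 ≤ (S i i).re ∧ (S i i).im = 0) :
    (W * S).trace.re ≤ S.trace.re := by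
  have hdiag (i : m) : (W * S) i i = W i i * S i i :=
    Finset.sum_eq_single i (fun j _ hj => by simp only [hSdiag hj, mul_zero]) (by simp)
  simp only [trace, diag_apply, Complex.re_sum, hdiag]
  refine Finset.sum_le_sum fun i _ => ?_
  rw [Complex.mul_re, (hSnn i).2, mul_zero, sub_zero]
  exact mul_le_of_le_one_left (hSnn i).1
    ((Complex.re_le_norm _).trans (entry_norm_bound_of_unitary hW i i))

theorem frobSq_sub_polar_le {A U V S B : Matrix m m ℂ}
    (hU : U ∈ unitaryGroup m ℂ) (hV : V ∈ unitaryGroup m ℂ)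
    (hSdiag : S.IsDiag) (hSnn : ∀ i, 0 ≤ (S i i).re ∧ (S i i).im = 0)
    (hA : A = U * S * Vᴴ) (hB : B ∈ unitaryGroup m ℂ) :
    frobSq (A - U * Vᴴ) ≤ frobSq (A - B) := by
  have hstar {W : Matrix m m ℂ} (hW : W ∈ unitaryGroup m ℂ) : Wᴴ ∈ unitaryGroup m ℂ :=
    Unitary.star_mem hW
  have hUV : U * Vᴴ ∈ unitaryGroup m ℂ := mul_mem hU (hstar hV)
  have hUU : Uᴴ * U = 1 := mem_unitaryGroup_iff'.mp hU
  have hVV : Vᴴ * V = 1 := mem_unitaryGroup_iff'.mp hV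
  have hpolar : ((U * Vᴴ)ᴴ * A).trace = S.trace := by
    rw [hA, conjTranspose_mul, conjTranspose_conjTranspose,
      show V * Uᴴ * (U * S * Vᴴ) = V * (Uᴴ * U) * S * Vᴴ by noncomm_ring,
      hUU, Matrix.mul_one, trace_mul_cycle, hVV, Matrix.one_mul]
  have hB_le : (Bᴴ * A).trace.re ≤ S.trace.re := by
    rw [hA, show Bᴴ * (U * S * Vᴴ) = Bᴴ * U * S * Vᴴ by noncomm_ring, trace_mul_cycle]
    exact re_trace_mul_le_of_isDiag (mul_mem (hstar hV) (mul_mem (hstar hB) hU)) hSdiag hSnn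
  rw [frobSq_sub, frobSq_sub, frobSq_of_mem_unitaryGroup hB, frobSq_of_mem_unitaryGroup hUV,
    hpolar]
  linarith

end Frobenius

theorem stmt3 (n : ℕ) (A U V S : Matrix (Fin (2 ^ n)) (Fin (2 ^ n)) ℂ)
    (hU : U ∈ Matrix.unitaryGroup (Fin (2 ^ n)) ℂ)
    (hV : V ∈ Matrix.unitaryGroup (Fin (2 ^ n)) ℂ)
    (hSdiag : S.IsDiag)
    (hSnn : ∀ i, 0 ≤ (S i i).re ∧ (S i i).im = 0)
    (hA : A = U * S * Vᴴ)
    (B : Matrix (Fin (2 ^ n)) (Fin (2 ^ n)) ℂ)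
    (hB : B ∈ Matrix.unitaryGroup (Fin (2 ^ n)) ℂ) :
    Real.sqrt (frobSq (A - U * Vᴴ)) ≤ Real.sqrt (frobSq (A - B)) :=
  Real.sqrt_le_sqrt (frobSq_sub_polar_le hU hV hSdiag hSnn hA hB)
end

section
/- Let Φ be a quantum channel (completely positive trace-preserving map) on 2^n × 2^n matrices. Then its diagonal Fourier coefficients satisfy 0 ≤ Φ̂(x,x) ≤ 1 for every x ∈ {0,1,2,3}^n, and ∑_{x ∈ {0,1,2,3}^n} Φ̂(x,x) = 1; i.e., the diagonal Fourier coefficients form a probability distribution. -/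
open scoped Classical
open Matrix MeasureTheory
open scoped ComplexOrder

noncomputable def pauli (a : Fin 4) : Matrix (Fin 2) (Fin 2) ℂ :=
  if a = 0 then 1
  else if a = 1 then !![0, 1; 1, 0]
  else if a = 2 then !![0, -Complex.I; Complex.I, 0]
  else !![1, 0; 0, -1]

/-- The Pauli string `σ_x = σ_{x 1} ⊗ ⋯ ⊗ σ_{x n}` as a `2^n × 2^n` matrix,
indexed by `Fin n → Fin 2`. -/
noncomputable def pauliString (n : ℕ) (x : Fin n → Fin 4) :
    Matrix (Fin n → Fin 2) (Fin n → Fin 2) ℂ :=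
  fun i j => ∏ k, pauli (x k) (i k) (j k)

/-- The Pauli coefficient `Â_x = 2^{-n} tr(σ_x A)`. -/
noncomputable def pauliCoeff (n : ℕ) (A : Matrix (Fin n → Fin 2) (Fin n → Fin 2) ℂ)
    (x : Fin n → Fin 4) : ℂ :=
  (pauliString n x * A).trace / 2 ^ n

/-- The Choi representation `J(Φ) = ∑_{i,j} Φ(|i⟩⟨j|) ⊗ |i⟩⟨j|` of a superoperator,
so that `J(Φ) ((a,b),(c,d)) = Φ(E_{bd})_{ac}`. -/
noncomputable def choi {m : Type*} [Fintype m] [DecidableEq m]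
    (Φ : Matrix m m ℂ → Matrix m m ℂ) : Matrix (m × m) (m × m) ℂ :=
  fun p q => Φ (Matrix.single p.2 q.2 1) p.1 q.1

/-- The basis superoperator `Φ_{x,y}(ρ) = σ_x ρ σ_y`. -/
noncomputable def pauliSuper (n : ℕ) (x y : Fin n → Fin 4) :
    Matrix (Fin n → Fin 2) (Fin n → Fin 2) ℂ → Matrix (Fin n → Fin 2) (Fin n → Fin 2) ℂ :=
  fun ρ => pauliString n x * ρ * pauliString n y

/-- The Fourier coefficient `Φ̂(x,y) = 4^{-n} tr(J(Φ_{x,y})† J(Φ))` of a superoperator. -/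
noncomputable def fcoeff (n : ℕ)
    (Φ : Matrix (Fin n → Fin 2) (Fin n → Fin 2) ℂ → Matrix (Fin n → Fin 2) (Fin n → Fin 2) ℂ)
    (x y : Fin n → Fin 4) : ℂ :=
  ((choi (pauliSuper n x y))ᴴ * choi Φ).trace / 4 ^ n

/-
The Choi matrix of `ρ ↦ σ_x ρ σ_x` is `w_x w_x^†`, where `w_x` is the vectorisation of
`σ_x`, so `Φ̂(x,x) = 4^{-n} ⟨w_x, J(Φ) w_x⟩`, which is nonnegative when `J(Φ)` is positive
semidefinite. The Pauli strings are orthogonal with `∑_x w_x w_x^† = 2^n · 1`, so summing over `x`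
gives `4^{-n} · 2^n · tr J(Φ)`, and trace preservation makes `tr J(Φ) = 2^n`.
-/

open Function

section Orthogonal

variable {ι m R : Type*} [Fintype ι] [Fintype m] [CommSemiring R] [StarRing R]

theorem Matrix.trace_conjTranspose_vecMulVec_star_mul (w : m → R) (M : Matrix m m R) :
    ((vecMulVec w (star w))ᴴ * M).trace = star w ⬝ᵥ (M *ᵥ w) := by
  rw [conjTranspose_vecMulVec, star_star, vecMulVec_mul, trace_vecMulVec, dotProduct_comm,
    dotProduct_mulVec]

theorem Matrix.sum_star_dotProduct_mulVec_of_orthogonal [DecidableEq m] (w : ι → m → R) (c : R)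
    (hw : ∀ p q, ∑ i, star (w i p) * w i q = if p = q then c else 0) (M : Matrix m m R) :
    ∑ i, star (w i) ⬝ᵥ (M *ᵥ w i) = c * M.trace := by
  calc ∑ i, star (w i) ⬝ᵥ (M *ᵥ w i)
      = ∑ p, ∑ q, (∑ i, star (w i p) * w i q) * M p q := by
        simp only [dotProduct, mulVec, Pi.star_apply, Finset.mul_sum, Finset.sum_mul]
        rw [Finset.sum_comm]
        refine Finset.sum_congr rfl fun p _ => ?_
        rw [Finset.sum_comm]
        exact Finset.sum_congr rfl fun q _ => Finset.sum_congr rfl fun i _ => by ring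
    _ = c * M.trace := by
        simp only [hw, ite_mul, zero_mul, Finset.sum_ite_eq, Finset.mem_univ, if_true,
          trace, diag, Finset.mul_sum]

end Orthogonal

theorem Complex.nonneg_re_le_one_of_sum_eq_one {ι : Type*} [Fintype ι] {f : ι → ℂ}
    (hf : ∀ i, 0 ≤ f i) (hsum : ∑ i, f i = 1) (i : ι) :
    0 ≤ (f i).re ∧ (f i).re ≤ 1 ∧ (f i).im = 0 := by
  have hle : f i ≤ 1 := hsum ▸ Finset.single_le_sum (fun j _ => hf j) (Finset.mem_univ i)
  obtain ⟨hre, him⟩ := Complex.le_def.mp (hf i)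
  exact ⟨hre, (Complex.le_def.mp hle).1, him.symm⟩

section Choi

variable {m : Type*} [Fintype m] [DecidableEq m]

theorem choi_mul_mul_conjTranspose (A : Matrix m m ℂ) :
    choi (fun ρ => A * ρ * Aᴴ) = vecMulVec (uncurry A) (star (uncurry A)) := by
  ext p q
  simp [choi, uncurry, vecMulVec_apply, mul_apply, single_apply, ite_and]

theorem trace_choi_of_trace_preserving {Φ : Matrix m m ℂ → Matrix m m ℂ}
    (hΦ : ∀ ρ, (Φ ρ).trace = ρ.trace) : (choi Φ).trace = Fintype.card m := by
  have hdiag : ∀ b : m, ∑ a, choi Φ (a, b) (a, b) = 1 := fun b => by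
    simpa [choi, trace, single_apply] using hΦ (single b b 1)
  rw [trace, Fintype.sum_prod_type, Finset.sum_comm]
  simp [diag, hdiag]

end Choi

theorem star_pauli_apply (a : Fin 4) (i j : Fin 2) : star (pauli a i j) = pauli a j i := by
  fin_cases a <;> fin_cases i <;> fin_cases j <;> simp [pauli, one_apply]

theorem sum_star_pauli_mul_pauli (i j k l : Fin 2) :
    ∑ a : Fin 4, star (pauli a i j) * pauli a k l = if i = k ∧ j = l then 2 else 0 := by
  fin_cases i <;> fin_cases j <;> fin_cases k <;> fin_cases l <;>
    simp [pauli, Fin.sum_univ_four, one_apply] <;> ring_nf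

theorem conjTranspose_pauliString (n : ℕ) (x : Fin n → Fin 4) :
    (pauliString n x)ᴴ = pauliString n x := by
  ext i j
  simp [pauliString, star_prod, star_pauli_apply]

theorem sum_star_pauliString_mul_pauliString (n : ℕ) (p q : (Fin n → Fin 2) × (Fin n → Fin 2)) :
    ∑ x : Fin n → Fin 4, star (uncurry (pauliString n x) p) * uncurry (pauliString n x) q
      = if p = q then 2 ^ n else 0 := by
  have hfactor : ∀ x : Fin n → Fin 4,
      star (uncurry (pauliString n x) p) * uncurry (pauliString n x) q
        = ∏ k, star (pauli (x k) (p.1 k) (p.2 k)) * pauli (x k) (q.1 k) (q.2 k) := fun x => by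
    simp [pauliString, uncurry, star_prod, Finset.prod_mul_distrib]
  simp_rw [hfactor, ← Fintype.prod_sum (fun k a =>
    star (pauli a (p.1 k) (p.2 k)) * pauli a (q.1 k) (q.2 k)), sum_star_pauli_mul_pauli,
    Fintype.prod_ite_zero, Finset.prod_const, Finset.card_univ, Fintype.card_fin, Prod.ext_iff,
    funext_iff, forall_and]

theorem fcoeff_self_eq_dotProduct (n : ℕ)
    (Φ : Matrix (Fin n → Fin 2) (Fin n → Fin 2) ℂ → Matrix (Fin n → Fin 2) (Fin n → Fin 2) ℂ)
    (x : Fin n → Fin 4) :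
    fcoeff n Φ x x
      = star (uncurry (pauliString n x)) ⬝ᵥ (choi Φ *ᵥ uncurry (pauliString n x)) / 4 ^ n := by
  have hsuper : pauliSuper n x x = fun ρ => pauliString n x * ρ * (pauliString n x)ᴴ := by
    rw [conjTranspose_pauliString]; rfl
  rw [fcoeff, hsuper, choi_mul_mul_conjTranspose, trace_conjTranspose_vecMulVec_star_mul]

theorem stmt12 (n : ℕ)
    (Φ : Matrix (Fin n → Fin 2) (Fin n → Fin 2) ℂ →ₗ[ℂ]
         Matrix (Fin n → Fin 2) (Fin n → Fin 2) ℂ)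
    (hCP : (choi (⇑Φ)).PosSemidef)
    (hTP : ∀ ρ, (Φ ρ).trace = ρ.trace) :
    (∀ x : Fin n → Fin 4,
      0 ≤ (fcoeff n (⇑Φ) x x).re ∧ (fcoeff n (⇑Φ) x x).re ≤ 1 ∧
        (fcoeff n (⇑Φ) x x).im = 0) ∧
    ∑ x : Fin n → Fin 4, fcoeff n (⇑Φ) x x = 1 := by
  have hnonneg : ∀ x, 0 ≤ fcoeff n Φ x x := fun x => by
    rw [fcoeff_self_eq_dotProduct]
    exact div_nonneg (hCP.dotProduct_mulVec_nonneg _) (by positivity)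
  have hsum : ∑ x, fcoeff n Φ x x = 1 := by
    simp_rw [fcoeff_self_eq_dotProduct, ← Finset.sum_div]
    rw [sum_star_dotProduct_mulVec_of_orthogonal _ _ (sum_star_pauliString_mul_pauliString n),
      trace_choi_of_trace_preserving hTP]
    norm_num [← mul_pow]
  exact ⟨Complex.nonneg_re_le_one_of_sum_eq_one hnonneg hsum, hsum⟩
end
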